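/- (Confluent Christoffel–Darboux formula.) Let T be a (p,q)-banded matrix with nonvanishing extreme diagonals, with determinantal polynomials Q_{n,N} and R_{n,N}. Then for every N ∈ ℕ and every x ∈ ℝ: α_N · β_N · ∑_{n=0}^{N} Q_{n,N}(x) · R_{n,N}(x) = P'_{N+1}(x)·P_N(x) − P'_N(x)·P_{N+1}(x), where P' denotes the derivative of the polynomial P. -/

import Mathlib

/-!
As a function of `n`, `Q_{n,N}` is a fixed linear combination of the `A^{(a)}_n`, hence again a
left eigenvector of `T` for `x`; it vanishes at `n = N + 1, …, N + p - 1` (two equal rows), and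
`Q_{N+p,N} = (-1)^{p-1} Q_{N+1,N+1}` (rotate the rows). Multiplying the eigenvector equation,
truncated at `N`, by the adjugate of `x - T^{[N]}` gives
`P_{N+1} Q_{N,N} = (-1)^{p-1} T_{N+p,N} P_N Q_{N+1,N+1}`, so `P_N = α_N Q_{N,N}` by induction
(cancelling the monic `P_N`); likewise `P_N = β_N R_{N,N}`. Finally the derivative `R'_{·,N}`
satisfies `T R' = x R' + R_{·,N}`, and the discrete Green identity for `Q_{·,N}` and `R'_{·,N}`
over `n ≤ N` reduces `∑ Q_{n,N} R_{n,N}` to two boundary terms, which are `P_N P'_{N+1}` and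
`P_{N+1} P'_N` up to the factor `α_N β_N`.
-/

open Polynomial Finset Matrix

def IsBanded {S : Type*} [Zero S] (p q : ℕ) (T : ℕ → ℕ → S) : Prop :=
  ∀ i j, (j + p < i ∨ i + q < j) → T i j = 0

namespace IsBanded

variable {S S' : Type*} [Zero S] [Zero S'] {p q : ℕ} {T : ℕ → ℕ → S}

lemma transpose (hT : IsBanded p q T) : IsBanded q p fun i j => T j i :=
  fun i j h => hT j i h.symm

lemma map (hT : IsBanded p q T) {f : S → S'} (hf : f 0 = 0) :
    IsBanded p q fun i j => f (T i j) :=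
  fun i j h => by simp only [hT i j h, hf]

end IsBanded

lemma sum_Icc_eq_sum_range_add_sum_Ioc {M : Type*} [AddCommMonoid M] {a b n N : ℕ}
    (h : ℕ → M) (hh : ∀ m, m + a < n ∨ n + b < m → h m = 0) (hn : n ≤ N) :
    ∑ m ∈ Icc (n - a) (n + b), h m = ∑ m ∈ range (N + 1), h m + ∑ m ∈ Ioc N (N + b), h m := by
  rw [range_eq_Ico, ← Ico_add_one_add_one_eq_Ioc, sum_Ico_consecutive _ (by omega) (by omega),
    ← range_eq_Ico]
  refine sum_subset (fun m hm => by simp only [mem_Icc, mem_range] at hm ⊢; omega)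
    fun m _ hm => hh m (by simp only [mem_Icc] at hm; omega)

lemma sum_Ioc_eq_of_eq_zero {M : Type*} [AddCommMonoid M] {N b : ℕ} (hb : 1 ≤ b) (h : ℕ → M)
    (hh : ∀ i, 1 ≤ i → i < b → h (N + i) = 0) : ∑ m ∈ Ioc N (N + b), h m = h (N + b) := by
  refine sum_eq_single _ (fun m hm hne => ?_) (fun h' => absurd (by simp; omega) h')
  obtain ⟨i, rfl⟩ : ∃ i, m = N + i := ⟨m - N, by simp at hm; omega⟩
  exact hh i (by simp at hm; omega) (by simp at hm; omega)

lemma sum_range_mul_sub_mul_eq {S : Type*} [CommRing S] {p q N : ℕ} (hp : 1 ≤ p) (hq : 1 ≤ q)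
    {T : ℕ → ℕ → S} (hT : IsBanded p q T) (f g : ℕ → S) (hf : ∀ i, 1 ≤ i → i < p → f (N + i) = 0)
    (hg : ∀ i, 1 ≤ i → i < q → g (N + i) = 0) :
    ∑ n ∈ range (N + 1), (f n * ∑ m ∈ Icc (n - p) (n + q), T n m * g m
      - (∑ m ∈ Icc (n - q) (n + p), f m * T m n) * g n)
      = f N * T N (N + q) * g (N + q) - f (N + p) * T (N + p) N * g N := by
  have hright : ∀ n ∈ range (N + 1), ∑ m ∈ Icc (n - p) (n + q), T n m * g m
      = ∑ m ∈ range (N + 1), T n m * g m + T n (N + q) * g (N + q) := fun n hn => by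
    rw [sum_Icc_eq_sum_range_add_sum_Ioc _ (fun m hm => by rw [hT n m hm, zero_mul])
      (by simp at hn; omega),
      sum_Ioc_eq_of_eq_zero hq _ fun i hi hi' => by rw [hg i hi hi', mul_zero]]
  have hleft : ∀ n ∈ range (N + 1), ∑ m ∈ Icc (n - q) (n + p), f m * T m n
      = ∑ m ∈ range (N + 1), f m * T m n + f (N + p) * T (N + p) n := fun n hn => by
    rw [sum_Icc_eq_sum_range_add_sum_Ioc _ (fun m hm => by rw [hT m n hm.symm, mul_zero])
      (by simp at hn; omega),
      sum_Ioc_eq_of_eq_zero hp _ fun i hi hi' => by rw [hf i hi hi', zero_mul]]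
  have hcorner : ∀ n ∈ range (N + 1), n ≠ N → T n (N + q) = 0 ∧ T (N + p) n = 0 :=
    fun n hn hne => ⟨hT _ _ (Or.inr (by simp at hn; omega)), hT _ _ (Or.inl (by simp at hn; omega))⟩
  have hinner : ∑ n ∈ range (N + 1), f n * ∑ m ∈ range (N + 1), T n m * g m
      = ∑ n ∈ range (N + 1), (∑ m ∈ range (N + 1), f m * T m n) * g n := by
    simp_rw [mul_sum, sum_mul]
    rw [sum_comm]
    exact sum_congr rfl fun _ _ => sum_congr rfl fun _ _ => by ring
  calc _ = ∑ n ∈ range (N + 1), ((f n * ∑ m ∈ range (N + 1), T n m * g m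
            - (∑ m ∈ range (N + 1), f m * T m n) * g n)
          + (f n * T n (N + q) * g (N + q) - f (N + p) * T (N + p) n * g n)) :=
        sum_congr rfl fun n hn => by rw [hright n hn, hleft n hn]; ring
    _ = ∑ n ∈ range (N + 1), (f n * T n (N + q) * g (N + q) - f (N + p) * T (N + p) n * g n) :=
        by rw [sum_add_distrib, sum_sub_distrib, hinner, sub_self, zero_add]
    _ = _ := sum_eq_single N (fun n hn hne => by simp [hcorner n hn hne]) (by simp)

section Casorati

variable {S : Type*} [CommRing S]

/-- For `F = A` this is the paper's `Q_{n,N}`: the Casorati determinant of `F 1, …, F p` at `N`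
(rows `N, …, N + p - 1`) with its first row replaced by row `n`. -/
def casoratiDet (p : ℕ) (F : ℕ → ℕ → S) (n N : ℕ) : S :=
  (of fun i a : Fin p =>
    if (i : ℕ) = 0 then F ((a : ℕ) + 1) n else F ((a : ℕ) + 1) (N + (i : ℕ))).det

variable {p : ℕ} {F : ℕ → ℕ → S}

lemma casoratiDet_eq_cramer (hp : 1 ≤ p) (n N : ℕ) :
    casoratiDet p F n N = (of fun i a : Fin p => F ((a : ℕ) + 1) (N + (i : ℕ)))ᵀ.cramer
      (fun a => F ((a : ℕ) + 1) n) ⟨0, hp⟩ := by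
  rw [cramer_transpose_apply, casoratiDet]
  congr 1
  ext i a
  by_cases hi : (i : ℕ) = 0 <;> simp [hi, updateRow_apply, Fin.ext_iff]

lemma sum_casoratiDet_mul (hp : 1 ≤ p) {s : Finset ℕ} {c : ℕ → S} {y : S} {n : ℕ}
    (h : ∀ a, 1 ≤ a → a ≤ p → ∑ m ∈ s, F a m * c m = y * F a n) (N : ℕ) :
    ∑ m ∈ s, casoratiDet p F m N * c m = y * casoratiDet p F n N := by
  have hrow : ∑ m ∈ s, c m • (fun a : Fin p => F ((a : ℕ) + 1) m)
      = y • fun a : Fin p => F ((a : ℕ) + 1) n := by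
    ext a
    simp only [Finset.sum_apply, Pi.smul_apply, smul_eq_mul]
    rw [← h _ (by omega) a.isLt]
    exact sum_congr rfl fun _ _ => mul_comm _ _
  simp only [casoratiDet_eq_cramer hp]
  rw [← smul_eq_mul y, ← Pi.smul_apply, ← map_smul, ← hrow, map_sum, Finset.sum_apply]
  exact sum_congr rfl fun _ _ => by rw [map_smul, Pi.smul_apply, smul_eq_mul, mul_comm]

lemma casoratiDet_add_eq_zero {i : ℕ} (hi : 1 ≤ i) (hip : i < p) (N : ℕ) :
    casoratiDet p F (N + i) N = 0 :=
  det_zero_of_row_eq (i := ⟨0, by omega⟩) (j := ⟨i, hip⟩) (by simp [Fin.ext_iff]; omega)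
    (by ext a; simp)

lemma casoratiDet_self (N : ℕ) :
    casoratiDet p F N N = (of fun i a : Fin p => F ((a : ℕ) + 1) (N + (i : ℕ))).det := by
  rw [casoratiDet]
  congr 1
  ext i a
  by_cases hi : (i : ℕ) = 0 <;> simp [hi]

lemma casoratiDet_add_self (hp : 1 ≤ p) (N : ℕ) :
    casoratiDet p F (N + p) N = (-1) ^ (p - 1) * casoratiDet p F (N + 1) (N + 1) := by
  obtain ⟨p, rfl⟩ : ∃ k, p = k + 1 := ⟨p - 1, by omega⟩
  have hrot := det_permute (finRotate (p + 1)) (of fun i a : Fin (p + 1) =>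
    if (i : ℕ) = 0 then F ((a : ℕ) + 1) (N + (p + 1)) else F ((a : ℕ) + 1) (N + (i : ℕ)))
  have hsub : (of fun i a : Fin (p + 1) =>
      if (i : ℕ) = 0 then F ((a : ℕ) + 1) (N + (p + 1))
      else F ((a : ℕ) + 1) (N + (i : ℕ))).submatrix (finRotate (p + 1)) id
      = of fun i a : Fin (p + 1) => F ((a : ℕ) + 1) (N + 1 + (i : ℕ)) := by
    ext i a
    by_cases hi : i = Fin.last p
    · simp [hi, add_assoc, add_comm 1 p]
    · simp only [submatrix_apply, of_apply, id, coe_finRotate, if_neg hi, Nat.add_one_ne_zero,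
        if_false, add_assoc, add_comm 1]
  rw [hsub, sign_finRotate, ← casoratiDet_self] at hrot
  rw [casoratiDet, hrot, Nat.add_sub_cancel]
  push_cast
  rw [← mul_assoc, ← mul_pow, neg_one_mul, neg_neg, one_pow, one_mul]

lemma casoratiDet_zero_zero (hF0 : ∀ a, 1 ≤ a → a ≤ p → ∀ n, n < a - 1 → F a n = 0)
    (hF1 : ∀ a, 1 ≤ a → a ≤ p → F a (a - 1) = 1) : casoratiDet p F 0 0 = 1 := by
  simp only [casoratiDet_self, zero_add]
  rw [det_of_isLowerTriangular (of fun i a : Fin p => F ((a : ℕ) + 1) i)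
    fun i a hia => hF0 _ (by omega) a.isLt _ (by simpa using hia)]
  exact prod_eq_one fun i _ => by simpa using hF1 ((i : ℕ) + 1) (by omega) i.isLt

end Casorati

lemma neg_one_pow_mul_prod_range_succ {S : Type*} [CommRing S] (r N : ℕ) (d : ℕ → S) :
    (-1) ^ (r * (N + 1)) * ∏ k ∈ range (N + 1), d k
      = (-1) ^ r * d N * ((-1) ^ (r * N) * ∏ k ∈ range N, d k) := by
  rw [prod_range_succ, mul_add, mul_one, pow_add]
  ring

section Truncation

variable {S : Type*} [CommRing S] {p q : ℕ} {T : ℕ → ℕ → S}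

/-- The `N × N` leading block, i.e. the paper's `T^{[N-1]}`: `P_N` is its characteristic
polynomial, also for `N = 0`. -/
def truncation (T : ℕ → ℕ → S) (N : ℕ) : Matrix (Fin N) (Fin N) S := of fun i j => T i j

lemma det_sub_truncation_mul_eq_sum_Ioc (hT : IsBanded p q T) {x : S} {f : ℕ → S}
    (hf : ∀ n, ∑ m ∈ Icc (n - q) (n + p), f m * T m n = x * f n) (N : ℕ) :
    (x • 1 - truncation T (N + 1)).det * f N = ∑ m ∈ Ioc N (N + p), f m *
      ∑ k : Fin (N + 1), T m k * (x • 1 - truncation T (N + 1)).adjugate k (Fin.last N) := by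
  set M := x • 1 - truncation T (N + 1)
  have hvec : (fun k : Fin (N + 1) => f k) ᵥ* M
      = fun n : Fin (N + 1) => ∑ m ∈ Ioc N (N + p), f m * T m n := by
    ext n
    have hsplit := sum_Icc_eq_sum_range_add_sum_Ioc (fun m => f m * T m n)
      (fun m hm => by rw [hT m n hm.symm, mul_zero]) (Nat.lt_succ_iff.mp n.isLt)
    rw [hf, ← Fin.sum_univ_eq_sum_range (fun m => f m * T m n)] at hsplit
    rw [vecMul_sub, vecMul_smul, vecMul_one, Pi.sub_apply, Pi.smul_apply, smul_eq_mul, hsplit]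
    simp [vecMul, dotProduct, truncation]
  have hadj := congrFun (congrArg (· ᵥ* M.adjugate) hvec) (Fin.last N)
  simp only [vecMul_vecMul, mul_adjugate, vecMul_smul, vecMul_one, Pi.smul_apply, smul_eq_mul,
    Fin.val_last] at hadj
  rw [hadj, vecMul, dotProduct]
  simp_rw [sum_mul, mul_sum]
  rw [sum_comm]
  exact sum_congr rfl fun _ _ => sum_congr rfl fun _ _ => by ring

lemma adjugate_sub_truncation_last (x : S) (N : ℕ) :
    (x • 1 - truncation T (N + 1)).adjugate (Fin.last N) (Fin.last N)
      = (x • 1 - truncation T N).det := by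
  rw [adjugate_fin_succ_eq_det_submatrix, Fin.succAbove_last, ← two_mul, pow_mul, neg_one_sq,
    one_pow, one_mul]
  congr 1
  ext i j
  simp [truncation, one_apply, Fin.castSucc_inj]

lemma det_sub_truncation_mul_casoratiDet_self (hp : 1 ≤ p) (hT : IsBanded p q T) {x : S}
    {F : ℕ → ℕ → S}
    (hF : ∀ a, 1 ≤ a → a ≤ p → ∀ n, ∑ m ∈ Icc (n - q) (n + p), F a m * T m n = x * F a n)
    (N : ℕ) :
    (x • 1 - truncation T (N + 1)).det * casoratiDet p F N N
      = (-1) ^ (p - 1) * T (N + p) N * (x • 1 - truncation T N).det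
        * casoratiDet p F (N + 1) (N + 1) := by
  set w : ℕ → S := fun m => ∑ k : Fin (N + 1), T m k *
    (x • 1 - truncation T (N + 1)).adjugate k (Fin.last N)
  have hsum := sum_casoratiDet_mul (s := Ioc N (N + p)) (c := w) hp
    (fun a ha ha' => (det_sub_truncation_mul_eq_sum_Ioc hT (hF a ha ha') N).symm) N
  rw [sum_Ioc_eq_of_eq_zero hp _ fun i hi hi' => by rw [casoratiDet_add_eq_zero hi hi', zero_mul]]
    at hsum
  have hw : w (N + p) = T (N + p) N * (x • 1 - truncation T N).det := by
    rw [← adjugate_sub_truncation_last]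
    refine sum_eq_single (Fin.last N) (fun k _ hk => ?_) (by simp)
    rw [hT _ _ (Or.inl (by have := Fin.val_lt_last hk; omega)), zero_mul]
  rw [← hsum, hw, casoratiDet_add_self hp]
  ring

end Truncation

section Charpoly

variable {K : Type*} [CommRing K] {p q : ℕ} {T : ℕ → ℕ → K}

lemma charpoly_truncation_eq_det (T : ℕ → ℕ → K) (N : ℕ) :
    (truncation T N).charpoly = ((X : K[X]) • 1 - truncation (fun i j => C (T i j)) N).det := by
  rw [charpoly, charmatrix]
  congr 1
  ext i j
  by_cases h : i = j <;> simp [truncation, one_apply, h]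

lemma charpoly_truncation_eq_C_mul_casoratiDet (hp : 1 ≤ p) (hT : IsBanded p q T)
    {F : ℕ → ℕ → K[X]} (hF0 : ∀ a, 1 ≤ a → a ≤ p → ∀ n, n < a - 1 → F a n = 0)
    (hF1 : ∀ a, 1 ≤ a → a ≤ p → F a (a - 1) = 1)
    (hF : ∀ a, 1 ≤ a → a ≤ p → ∀ n, ∑ m ∈ Icc (n - q) (n + p), F a m * C (T m n) = X * F a n)
    (N : ℕ) :
    (truncation T N).charpoly
      = C ((-1) ^ ((p - 1) * N) * ∏ k ∈ range N, T (k + p) k) * casoratiDet p F N N := by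
  induction N with
  | zero => simp [charpoly_isEmpty, casoratiDet_zero_zero hF0 hF1]
  | succ N ih =>
    have hstep := det_sub_truncation_mul_casoratiDet_self hp (hT.map C_0) hF N
    rw [← charpoly_truncation_eq_det, ← charpoly_truncation_eq_det] at hstep
    apply (charpoly_monic (truncation T N)).isRegular.left
    simp only
    rw [neg_one_pow_mul_prod_range_succ, map_mul, map_mul, map_pow, map_neg, map_one]
    calc (truncation T N).charpoly * (truncation T (N + 1)).charpoly
        = C ((-1) ^ ((p - 1) * N) * ∏ k ∈ range N, T (k + p) k)
          * ((truncation T (N + 1)).charpoly * casoratiDet p F N N) := by rw [ih]; ring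
      _ = _ := by rw [hstep]; ring

end Charpoly

lemma sum_C_mul_derivative_eq {K : Type*} [CommRing K] {s : Finset ℕ} {c : ℕ → K}
    {g : ℕ → K[X]} {n : ℕ} (h : ∑ m ∈ s, C (c m) * g m = X * g n) :
    ∑ m ∈ s, C (c m) * derivative (g m) = g n + X * derivative (g n) := by
  simpa [derivative_sum, derivative_mul] using congrArg derivative h

lemma sum_casoratiDet_mul_casoratiDet {K : Type*} [CommRing K] {p q : ℕ} (hp : 1 ≤ p)
    (hq : 1 ≤ q) {T : ℕ → ℕ → K} (hT : IsBanded p q T) {A B : ℕ → ℕ → K[X]}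
    (hA : ∀ a, 1 ≤ a → a ≤ p → ∀ n, ∑ m ∈ Icc (n - q) (n + p), A a m * C (T m n) = X * A a n)
    (hB : ∀ b, 1 ≤ b → b ≤ q → ∀ n, ∑ m ∈ Icc (n - p) (n + q), B b m * C (T n m) = X * B b n)
    (N : ℕ) :
    ∑ n ∈ range (N + 1), casoratiDet p A n N * casoratiDet q B n N
      = (-1) ^ (q - 1) * C (T N (N + q)) * casoratiDet p A N N
          * derivative (casoratiDet q B (N + 1) (N + 1))
        - (-1) ^ (p - 1) * C (T (N + p) N) * casoratiDet p A (N + 1) (N + 1)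
          * derivative (casoratiDet q B N N) := by
  have hQ : ∀ n, ∑ m ∈ Icc (n - q) (n + p), casoratiDet p A m N * C (T m n)
      = X * casoratiDet p A n N := fun n => sum_casoratiDet_mul hp (hA · · · n) N
  have hR : ∀ n, ∑ m ∈ Icc (n - p) (n + q), C (T n m) * derivative (casoratiDet q B m N)
      = casoratiDet q B n N + X * derivative (casoratiDet q B n N) := fun n => by
    refine sum_C_mul_derivative_eq ?_
    simp only [mul_comm (C _)]
    exact sum_casoratiDet_mul hq (hB · · · n) N
  have hgreen := sum_range_mul_sub_mul_eq hp hq (hT.map C_0) (casoratiDet p A · N)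
    (fun n => derivative (casoratiDet q B n N)) (fun i hi hi' => casoratiDet_add_eq_zero hi hi' N)
    (fun i hi hi' => by rw [casoratiDet_add_eq_zero hi hi', derivative_zero])
  simp only [hQ, hR] at hgreen
  refine (sum_congr rfl fun n _ => ?_).trans (hgreen.trans ?_)
  · ring
  · rw [casoratiDet_add_self hp, casoratiDet_add_self hq]
    simp only [derivative_mul, derivative_pow, derivative_neg, derivative_one, neg_zero, mul_zero,
      zero_mul, zero_add]
    ring

theorem confluent_christoffel_darboux_general
    (p q : ℕ) (hp : 1 ≤ p) (hq : 1 ≤ q)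
    (T : ℕ → ℕ → ℝ)
    (hband : ∀ i j, (j + p < i ∨ i + q < j) → T i j = 0)
    (A : ℕ → ℕ → Polynomial ℝ)
    (hA0 : ∀ a, 1 ≤ a → a ≤ p → ∀ n, n < a - 1 → A a n = 0)
    (hA1 : ∀ a, 1 ≤ a → a ≤ p → A a (a - 1) = 1)
    (hArec : ∀ a, 1 ≤ a → a ≤ p → ∀ n,
      ∑ m ∈ Finset.Icc (n - q) (n + p), A a m * Polynomial.C (T m n)
        = Polynomial.X * A a n)
    (B : ℕ → ℕ → Polynomial ℝ)
    (hB0 : ∀ b, 1 ≤ b → b ≤ q → ∀ n, n < b - 1 → B b n = 0)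
    (hB1 : ∀ b, 1 ≤ b → b ≤ q → B b (b - 1) = 1)
    (hBrec : ∀ b, 1 ≤ b → b ≤ q → ∀ n,
      ∑ m ∈ Finset.Icc (n - p) (n + q), Polynomial.C (T n m) * B b m
        = Polynomial.X * B b n)
    (P : ℕ → Polynomial ℝ)
    (hP0 : P 0 = 1)
    (hPsucc : ∀ N, P (N + 1) = (Matrix.of fun i j : Fin (N + 1) => T i j).charpoly)
    (α : ℕ → ℝ)
    (hα : ∀ N, α N = (-1 : ℝ) ^ ((p - 1) * N) * ∏ k ∈ Finset.range N, T (k + p) k)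
    (β : ℕ → ℝ)
    (hβ : ∀ N, β N = (-1 : ℝ) ^ ((q - 1) * N) * ∏ k ∈ Finset.range N, T k (k + q))
    (Q : ℕ → ℕ → Polynomial ℝ)
    (hQ : ∀ n N, Q n N = (Matrix.of fun i a : Fin p =>
        if (i : ℕ) = 0 then A ((a : ℕ) + 1) n else A ((a : ℕ) + 1) (N + (i : ℕ))).det)
    (R : ℕ → ℕ → Polynomial ℝ)
    (hR : ∀ n N, R n N = (Matrix.of fun i b : Fin q =>
        if (i : ℕ) = 0 then B ((b : ℕ) + 1) n else B ((b : ℕ) + 1) (N + (i : ℕ))).det) :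
    ∀ (N : ℕ) (x : ℝ),
      α N * β N * ∑ n ∈ Finset.range (N + 1), (Q n N).eval x * (R n N).eval x
        = (Polynomial.derivative (P (N + 1))).eval x * (P N).eval x
          - (Polynomial.derivative (P N)).eval x * (P (N + 1)).eval x := by
  intro N x
  obtain rfl : Q = casoratiDet p A := funext fun n => funext (hQ n)
  obtain rfl : R = casoratiDet q B := funext fun n => funext (hR n)
  have hBrec' : ∀ b, 1 ≤ b → b ≤ q → ∀ n,
      ∑ m ∈ Icc (n - p) (n + q), B b m * C (T n m) = X * B b n := fun b hb hb' n => by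
    rw [← hBrec b hb hb' n]
    exact sum_congr rfl fun _ _ => mul_comm _ _
  have hP : ∀ M, P M = (truncation T M).charpoly
    | 0 => by rw [hP0, charpoly_isEmpty]
    | M + 1 => hPsucc M
  have hPA : ∀ M, P M = C (α M) * casoratiDet p A M M := fun M => by
    rw [hP, hα]
    exact charpoly_truncation_eq_C_mul_casoratiDet hp hband hA0 hA1 hArec M
  have hdPB : ∀ M, derivative (P M) = C (β M) * derivative (casoratiDet q B M M) := fun M => by
    rw [hP, ← charpoly_transpose, hβ, ← derivative_C_mul]
    exact congrArg derivative
      (charpoly_truncation_eq_C_mul_casoratiDet hq (IsBanded.transpose hband) hB0 hB1 hBrec' M)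
  have key : C (α N * β N) * ∑ n ∈ range (N + 1), casoratiDet p A n N * casoratiDet q B n N
      = derivative (P (N + 1)) * P N - derivative (P N) * P (N + 1) := by
    rw [sum_casoratiDet_mul_casoratiDet hp hq hband hArec hBrec', hdPB, hdPB, hPA, hPA,
      hβ (N + 1), neg_one_pow_mul_prod_range_succ, ← hβ, hα (N + 1),
      neg_one_pow_mul_prod_range_succ, ← hα]
    simp only [map_mul, map_pow, map_neg, map_one]
    ring
  simpa [eval_finsetSum] using congrArg (eval x) key

/-- Confluent Christoffel–Darboux formula for the determinantal polynomials of a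
`(p,q)`-banded matrix with nonvanishing extreme diagonals:
`α_N β_N ∑_{n=0}^{N} Q_{n,N}(x) R_{n,N}(x) = P'_{N+1}(x)P_N(x) − P'_N(x)P_{N+1}(x)`. -/
theorem confluent_christoffel_darboux
    (p q : ℕ) (hp : 1 ≤ p) (hq : 1 ≤ q)
    (T : ℕ → ℕ → ℝ)
    (hband : ∀ i j, (j + p < i ∨ i + q < j) → T i j = 0)
    (hext : ∀ n, T (n + p) n ≠ 0 ∧ T n (n + q) ≠ 0)
    (ν : ℕ → ℕ → ℝ) (A : ℕ → ℕ → Polynomial ℝ)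
    (hA0 : ∀ a, 1 ≤ a → a ≤ p → ∀ n, n < a - 1 → A a n = 0)
    (hA1 : ∀ a, 1 ≤ a → a ≤ p → A a (a - 1) = 1)
    (hAconst : ∀ a, 1 ≤ a → a ≤ p → ∀ j, a ≤ j → j ≤ p - 1 → A a j = Polynomial.C (ν a j))
    (hArec : ∀ a, 1 ≤ a → a ≤ p → ∀ n,
      ∑ m ∈ Finset.Icc (n - q) (n + p), A a m * Polynomial.C (T m n)
        = Polynomial.X * A a n)
    (ξ : ℕ → ℕ → ℝ) (B : ℕ → ℕ → Polynomial ℝ)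
    (hB0 : ∀ b, 1 ≤ b → b ≤ q → ∀ n, n < b - 1 → B b n = 0)
    (hB1 : ∀ b, 1 ≤ b → b ≤ q → B b (b - 1) = 1)
    (hBconst : ∀ b, 1 ≤ b → b ≤ q → ∀ j, b ≤ j → j ≤ q - 1 → B b j = Polynomial.C (ξ b j))
    (hBrec : ∀ b, 1 ≤ b → b ≤ q → ∀ n,
      ∑ m ∈ Finset.Icc (n - p) (n + q), Polynomial.C (T n m) * B b m
        = Polynomial.X * B b n)
    (P : ℕ → Polynomial ℝ)
    (hP0 : P 0 = 1)
    (hPsucc : ∀ N, P (N + 1) = (Matrix.of fun i j : Fin (N + 1) => T i j).charpoly)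
    (α : ℕ → ℝ)
    (hα : ∀ N, α N = (-1 : ℝ) ^ ((p - 1) * N) * ∏ k ∈ Finset.range N, T (k + p) k)
    (β : ℕ → ℝ)
    (hβ : ∀ N, β N = (-1 : ℝ) ^ ((q - 1) * N) * ∏ k ∈ Finset.range N, T k (k + q))
    (Q : ℕ → ℕ → Polynomial ℝ)
    (hQ : ∀ n N, Q n N = (Matrix.of fun i a : Fin p =>
        if (i : ℕ) = 0 then A ((a : ℕ) + 1) n else A ((a : ℕ) + 1) (N + (i : ℕ))).det)
    (R : ℕ → ℕ → Polynomial ℝ)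
    (hR : ∀ n N, R n N = (Matrix.of fun i b : Fin q =>
        if (i : ℕ) = 0 then B ((b : ℕ) + 1) n else B ((b : ℕ) + 1) (N + (i : ℕ))).det) :
    ∀ (N : ℕ) (x : ℝ),
      α N * β N * ∑ n ∈ Finset.range (N + 1), (Q n N).eval x * (R n N).eval x
        = (Polynomial.derivative (P (N + 1))).eval x * (P N).eval x
          - (Polynomial.derivative (P N)).eval x * (P (N + 1)).eval x :=
  confluent_christoffel_darboux_general p q hp hq T hband A hA0 hA1 hArec B hB0 hB1 hBrec P hP0
    hPsucc α hα β hβ Q hQ R hR
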